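/- Let G = G(m₀,m₁,m₂,m₃) with all mᵢ ≥ 1 be the twisted graph. Then G is triangle-free. -/

import Mathlib

/-- The edge set of the tournament `T₄`. -/
def T4rel (i i' : Fin 4) : Prop :=
  (i.val, i'.val) ∈ [(0, 1), (0, 2), (0, 3), (1, 2), (2, 3), (3, 1)]

/-- The twisted graph `G(m₀, m₁, m₂, m₃)` where `m i` is the number of 4-cycles
in part `i`.  Vertices are triples `(i, j, x)` with `i ∈ Fin 4`, `j < m i`,
`x ∈ Z/4`. -/
def twistedGraph (m : Fin 4 → ℕ) :
    SimpleGraph {v : Fin 4 × ℕ × ZMod 4 // v.2.1 < m v.1} where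
  Adj p q :=
    (p.1.1 = q.1.1 ∧ p.1.2.1 = q.1.2.1 ∧
      (q.1.2.2 = p.1.2.2 + 1 ∨ p.1.2.2 = q.1.2.2 + 1)) ∨
    (p.1.1 = q.1.1 ∧ p.1.2.1 ≠ q.1.2.1 ∧ q.1.2.2 = p.1.2.2 + 2) ∨
    (T4rel p.1.1 q.1.1 ∧ q.1.2.2 = p.1.2.2 + 3) ∨
    (T4rel q.1.1 p.1.1 ∧ p.1.2.2 = q.1.2.2 + 3)
  symm := by
    constructor
    rintro ⟨⟨i, j, x⟩, hp⟩ ⟨⟨i', j', x'⟩, hq⟩ h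
    dsimp at h ⊢
    rcases h with ⟨h1, h2, h3⟩ | ⟨h1, h2, h3⟩ | ⟨h1, h2⟩ | ⟨h1, h2⟩
    · exact Or.inl ⟨h1.symm, h2.symm, h3.symm⟩
    · refine Or.inr (Or.inl ⟨h1.symm, Ne.symm h2, ?_⟩)
      rw [h3, add_assoc, show (2 : ZMod 4) + 2 = 0 by decide, add_zero]
    · exact Or.inr (Or.inr (Or.inr ⟨h1, h2⟩))
    · exact Or.inr (Or.inr (Or.inl ⟨h1, h2⟩))
  loopless := by
    constructor
    rintro ⟨⟨i, j, x⟩, hp⟩ h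
    dsimp at h
    rcases h with ⟨-, -, h | h⟩ | ⟨-, h, -⟩ | ⟨h, -⟩ | ⟨h, -⟩
    · simp only [left_eq_add] at h; exact absurd h (by decide)
    · simp only [left_eq_add] at h; exact absurd h (by decide)
    · exact h rfl
    · revert h; have := i.is_lt; unfold T4rel; fin_cases i <;> decide
    · revert h; have := i.is_lt; unfold T4rel; fin_cases i <;> decide

/-!
Adjacent vertices have distinct positions `x`, and a vertex `c` sees all its neighbours of a
given part that lie outside its own 4-cycle at one position: `x + 2` inside its own part,
`x + 3` or `x + 1` in another part according to the orientation of `T₄`. Hence if two vertices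
of a triangle share a part, the third lies in the 4-cycle of one of them, and then all three lie
in one 4-cycle. So every edge of a triangle either lies in a 4-cycle or joins two parts; such an
edge changes the parity of the position, which is impossible around a cycle of length three.
-/

instance : DecidableRel T4rel := fun i i' => by unfold T4rel; infer_instance

theorem T4rel_irrefl (i : Fin 4) : ¬ T4rel i i := by
  revert i; decide

theorem T4rel_asymm {i i' : Fin 4} (h : T4rel i i') : ¬ T4rel i' i := by
  revert i i'; decide

def parity : ZMod 4 →+* ZMod 2 := ZMod.castHom (by decide) (ZMod 2)

theorem parity_add_one_ne (x : ZMod 4) : parity (x + 1) ≠ parity x := by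
  revert x; decide

theorem parity_add_three_ne (x : ZMod 4) : parity (x + 3) ≠ parity x := by
  revert x; decide

namespace twistedGraph

abbrev Vertex (m : Fin 4 → ℕ) := {v : Fin 4 × ℕ × ZMod 4 // v.2.1 < m v.1}

variable {m : Fin 4 → ℕ}

def cycleOf (p : Vertex m) : Fin 4 × ℕ := (p.1.1, p.1.2.1)

theorem part_eq_of_cycleOf_eq {p q : Vertex m} (h : cycleOf p = cycleOf q) : p.1.1 = q.1.1 :=
  (Prod.mk.inj h).1

def neighbourShift (i i' : Fin 4) : ZMod 4 :=
  if i = i' then 2 else if T4rel i i' then 3 else 1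

theorem pos_ne_of_adj {p q : Vertex m} (h : (twistedGraph m).Adj p q) : p.1.2.2 ≠ q.1.2.2 := by
  obtain ⟨⟨i, j, x⟩, hp⟩ := p
  obtain ⟨⟨i', j', x'⟩, hq⟩ := q
  rintro rfl
  rcases h with ⟨-, -, h | h⟩ | ⟨-, -, h⟩ | ⟨-, h⟩ | ⟨-, h⟩ <;>
    exact absurd (left_eq_add.1 h) (by decide)

theorem pos_eq_of_adj_of_cycleOf_ne {c a : Vertex m} (h : (twistedGraph m).Adj c a)
    (hca : cycleOf a ≠ cycleOf c) : a.1.2.2 = c.1.2.2 + neighbourShift c.1.1 a.1.1 := by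
  obtain ⟨⟨i, j, x⟩, hc⟩ := c
  obtain ⟨⟨i', j', x'⟩, ha⟩ := a
  simp only [cycleOf, ne_eq, Prod.mk.injEq] at hca
  rcases h with ⟨rfl, rfl, -⟩ | ⟨rfl, -, h⟩ | ⟨hT, h⟩ | ⟨hT, h⟩
  · exact absurd ⟨rfl, rfl⟩ hca
  · simpa [neighbourShift] using h
  · have : i ≠ i' := by rintro rfl; exact T4rel_irrefl i hT
    simpa [neighbourShift, this, hT] using h
  · have : i ≠ i' := by rintro rfl; exact T4rel_irrefl i hT
    simp only [neighbourShift, this, T4rel_asymm hT, if_false]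
    subst h; grind

theorem pos_eq_of_adj_of_adj {a b c : Vertex m} (hca : (twistedGraph m).Adj c a)
    (hcb : (twistedGraph m).Adj c b) (hab : a.1.1 = b.1.1) (ha : cycleOf a ≠ cycleOf c)
    (hb : cycleOf b ≠ cycleOf c) : a.1.2.2 = b.1.2.2 := by
  rw [pos_eq_of_adj_of_cycleOf_ne hca ha, pos_eq_of_adj_of_cycleOf_ne hcb hb, hab]

theorem parity_ne_of_adj {p q : Vertex m} (h : (twistedGraph m).Adj p q)
    (hpq : cycleOf p = cycleOf q ∨ p.1.1 ≠ q.1.1) : parity p.1.2.2 ≠ parity q.1.2.2 := by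
  obtain ⟨⟨i, j, x⟩, hp⟩ := p
  obtain ⟨⟨i', j', x'⟩, hq⟩ := q
  simp only [cycleOf, Prod.mk.injEq] at hpq
  rcases h with ⟨-, -, rfl | rfl⟩ | ⟨rfl, hj, -⟩ | ⟨-, rfl⟩ | ⟨-, rfl⟩
  · exact (parity_add_one_ne x).symm
  · exact parity_add_one_ne x'
  · rcases hpq with ⟨-, rfl⟩ | hi
    exacts [(hj rfl).elim, (hi rfl).elim]
  · exact (parity_add_three_ne x).symm
  · exact parity_add_three_ne x'

theorem cycleOf_eq_or_cycleOf_eq_of_adj {a b c : Vertex m} (hab : (twistedGraph m).Adj a b)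
    (hca : (twistedGraph m).Adj c a) (hcb : (twistedGraph m).Adj c b) (h : a.1.1 = b.1.1) :
    cycleOf a = cycleOf c ∨ cycleOf b = cycleOf c := by
  by_contra! hne
  exact pos_ne_of_adj hab (pos_eq_of_adj_of_adj hca hcb h hne.1 hne.2)

theorem cycleOf_eq_or_part_ne_of_triangle {a b c : Vertex m} (hab : (twistedGraph m).Adj a b)
    (hbc : (twistedGraph m).Adj b c) (hca : (twistedGraph m).Adj c a) :
    cycleOf a = cycleOf b ∨ a.1.1 ≠ b.1.1 := by
  refine or_iff_not_imp_right.2 fun hpart => ?_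
  rcases cycleOf_eq_or_cycleOf_eq_of_adj hab hca hbc.symm (not_not.1 hpart) with hac | hbc'
  · rcases cycleOf_eq_or_cycleOf_eq_of_adj hca.symm hab.symm hbc (part_eq_of_cycleOf_eq hac)
      with h | h
    · exact h
    · exact hac.trans h
  · rcases cycleOf_eq_or_cycleOf_eq_of_adj hbc hab hca.symm (part_eq_of_cycleOf_eq hbc')
      with h | h
    · exact h.symm
    · exact (hbc'.trans h).symm

end twistedGraph

theorem ZMod.two_eq_or_eq_or_eq (u v w : ZMod 2) : u = v ∨ v = w ∨ w = u := by
  revert u v w; decide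

open twistedGraph in
theorem stmt_12_general (m : Fin 4 → ℕ) :
    (twistedGraph m).CliqueFree 3 := by
  intro t ht
  obtain ⟨a, b, c, hab, hac, hbc, -⟩ := SimpleGraph.is3Clique_iff.1 ht
  have hca := hac.symm
  rcases ZMod.two_eq_or_eq_or_eq (parity a.1.2.2) (parity b.1.2.2) (parity c.1.2.2)
    with h | h | h
  · exact parity_ne_of_adj hab (cycleOf_eq_or_part_ne_of_triangle hab hbc hca) h
  · exact parity_ne_of_adj hbc (cycleOf_eq_or_part_ne_of_triangle hbc hca hab) h
  · exact parity_ne_of_adj hca (cycleOf_eq_or_part_ne_of_triangle hca hab hbc) h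

theorem stmt_12 (m : Fin 4 → ℕ) (hm : ∀ i, 1 ≤ m i) :
    (twistedGraph m).CliqueFree 3 :=
  stmt_12_general m
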